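/- Gap bound at a maximizer of a shifted parameter (used in the convergence proof): Let f : ℝ^d × Δ^L → ℝ be such that for every θ the map π ↦ f(θ, π) is concave and differentiable on a neighborhood of Δ^L, and for every π the map θ ↦ f(θ, π) is l-Lipschitz. For each θ let π*(θ) be a maximizer of f(θ, ·) over Δ^L. Then for all θ_k, θ_s ∈ ℝ^d and all π_k ∈ Δ^L: ⟨∇_π f(θ_k, π_k), π*(θ_s) − π_k⟩ ≥ f(θ_k, π*(θ_k)) − f(θ_k, π_k) − 2l‖θ_s − θ_k‖. -/

import Mathlib

open scoped BigOperators RealInnerProductSpace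

noncomputable section

/-! Concavity gives `f θk (π* θs) - f θk πk ≤ ⟪∇ f θk πk, π* θs - πk⟫`, so it remains to bound
`f θk (π* θk) - f θk (π* θs)` by `2 l ‖θs - θk‖`: moving from `f θk` to `f θs` costs at most
`l ‖θs - θk‖` at each of the two points, and `π* θs` maximizes `f θs`. -/

def simplex (L : ℕ) : Set (EuclideanSpace ℝ (Fin L)) :=
  {π | (∀ i, 0 ≤ π i) ∧ ∑ i, π i = 1}

theorem ConcaveOn.sub_le_fderiv_apply {E : Type*} [NormedAddCommGroup E] [NormedSpace ℝ E]
    {s : Set E} {g : E → ℝ} {g' : E →L[ℝ] ℝ} {x y : E} (hg : ConcaveOn ℝ s g)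
    (hx : x ∈ s) (hy : y ∈ s) (hg' : HasFDerivAt g g' x) : g y - g x ≤ g' (y - x) := by
  -- reduce to the one-variable slope inequality along the segment from `x` to `y`
  let γ : ℝ →ᵃ[ℝ] E := AffineMap.lineMap x y
  have hγ0 : γ 0 = x := AffineMap.lineMap_apply_zero x y
  have hγ1 : γ 1 = y := AffineMap.lineMap_apply_one x y
  have hline : ConcaveOn ℝ (γ ⁻¹' s) (g ∘ γ) := hg.comp_affineMap γ
  have hderiv : HasDerivAt (g ∘ γ) (g' (y - x)) 0 :=
    (hγ0 ▸ hg').comp_hasDerivAt 0 AffineMap.hasDerivAt_lineMap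
  simpa [slope_def_field, hγ0, hγ1] using
    hline.slope_le_of_hasDerivAt (show γ 0 ∈ s from hγ0 ▸ hx) (show γ 1 ∈ s from hγ1 ▸ hy)
      zero_lt_one hderiv

theorem ConcaveOn.sub_le_inner_gradient {E : Type*} [NormedAddCommGroup E]
    [InnerProductSpace ℝ E] [CompleteSpace E] {s : Set E} {g : E → ℝ} {G x y : E}
    (hg : ConcaveOn ℝ s g) (hx : x ∈ s) (hy : y ∈ s) (hG : HasGradientAt g G x) :
    g y - g x ≤ ⟪G, y - x⟫ :=
  hg.sub_le_fderiv_apply hx hy hG.hasFDerivAt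

theorem IsMaxOn.sub_le_two_mul_of_abs_sub_le {β : Type*} {s : Set β} {u v : β → ℝ} {a b : β}
    {ε : ℝ} (hb : IsMaxOn v s b) (ha : a ∈ s) (hbs : b ∈ s)
    (huv : ∀ π ∈ s, |u π - v π| ≤ ε) : u a - u b ≤ 2 * ε := by
  have hva : v a ≤ v b := isMaxOn_iff.mp hb a ha
  have hua := (abs_le.mp (huv a ha)).2
  have hub := (abs_le.mp (huv b hbs)).1
  linarith

theorem gap_bound_shifted_maximizer_general
    {d L : ℕ}
    (f : EuclideanSpace ℝ (Fin d) → EuclideanSpace ℝ (Fin L) → ℝ)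
    (l : ℝ)
    (hconc : ∀ θ, ConcaveOn ℝ (simplex L) (f θ))
    (U : Set (EuclideanSpace ℝ (Fin L))) (hUopen : IsOpen U) (hUsub : simplex L ⊆ U)
    (hdiff : ∀ θ, DifferentiableOn ℝ (f θ) U)
    (hlip : ∀ π ∈ simplex L, ∀ θ θ', |f θ π - f θ' π| ≤ l * ‖θ - θ'‖)
    (πstar : EuclideanSpace ℝ (Fin d) → EuclideanSpace ℝ (Fin L))
    (hπstar : ∀ θ, πstar θ ∈ simplex L ∧ ∀ π ∈ simplex L, f θ π ≤ f θ (πstar θ)) :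
    ∀ (θk θs : EuclideanSpace ℝ (Fin d)), ∀ πk ∈ simplex L,
      f θk (πstar θk) - f θk πk - 2 * l * ‖θs - θk‖
        ≤ ⟪gradient (f θk) πk, πstar θs - πk⟫ := by
  intro θk θs πk hπk
  have hgrad : HasGradientAt (f θk) (gradient (f θk) πk) πk :=
    ((hdiff θk πk (hUsub hπk)).differentiableAt (hUopen.mem_nhds (hUsub hπk))).hasGradientAt
  have htangent := (hconc θk).sub_le_inner_gradient hπk (hπstar θs).1 hgrad
  have hshift : f θk (πstar θk) - f θk (πstar θs) ≤ 2 * (l * ‖θs - θk‖) :=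
    IsMaxOn.sub_le_two_mul_of_abs_sub_le (isMaxOn_iff.mpr (hπstar θs).2) (hπstar θk).1
      (hπstar θs).1 fun π hπ => norm_sub_rev θs θk ▸ hlip π hπ θk θs
  linarith

/-- **Gap bound at a maximizer of a shifted parameter** (used in the convergence proof):
`⟨∇_π f(θ_k, π_k), π*(θ_s) − π_k⟩ ≥ f(θ_k, π*(θ_k)) − f(θ_k, π_k) − 2l‖θ_s − θ_k‖`. -/
theorem gap_bound_shifted_maximizer
    {d L : ℕ}
    (f : EuclideanSpace ℝ (Fin d) → EuclideanSpace ℝ (Fin L) → ℝ)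
    (l : ℝ) (hl : 0 ≤ l)
    (hconc : ∀ θ, ConcaveOn ℝ (simplex L) (f θ))
    (U : Set (EuclideanSpace ℝ (Fin L))) (hUopen : IsOpen U) (hUsub : simplex L ⊆ U)
    (hdiff : ∀ θ, DifferentiableOn ℝ (f θ) U)
    (hlip : ∀ π ∈ simplex L, ∀ θ θ', |f θ π - f θ' π| ≤ l * ‖θ - θ'‖)
    (πstar : EuclideanSpace ℝ (Fin d) → EuclideanSpace ℝ (Fin L))
    (hπstar : ∀ θ, πstar θ ∈ simplex L ∧ ∀ π ∈ simplex L, f θ π ≤ f θ (πstar θ)) :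
    ∀ (θk θs : EuclideanSpace ℝ (Fin d)), ∀ πk ∈ simplex L,
      f θk (πstar θk) - f θk πk - 2 * l * ‖θs - θk‖
        ≤ ⟪gradient (f θk) πk, πstar θs - πk⟫ :=
  gap_bound_shifted_maximizer_general f l hconc U hUopen hUsub hdiff hlip πstar hπstar

end
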